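/- For every musical interval σ ∈ 𝔖 one has 𝒩(K(σ)) ≤ 𝒩(σ), and equality holds if and only if σ = 𝔬 is the octave. -/

import Mathlib

/-- The positive rational numbers ℚ₊. -/
abbrev Qpos := {q : ℚ // 0 < q}

/-- Octave equivalence on ℚ₊: `q₁ ∼ q₂` iff `q₁ = 2^n * q₂` for some `n ∈ ℤ`. -/
def octaveRel (q₁ q₂ : Qpos) : Prop := ∃ n : ℤ, (q₁ : ℚ) = 2 ^ n * (q₂ : ℚ)

/-- The group of musical intervals `𝔖 = ℚ₊/∼`. -/
def MusInt := Quot octaveRel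

/-- The musical interval `[q]` represented by a positive rational `q`. -/
def cls (q : ℚ) (h : 0 < q) : MusInt := Quot.mk octaveRel ⟨q, h⟩

/-- The octave `𝔬 = [1/2]`. -/
def octave : MusInt := cls (1/2) (by norm_num)

/-- `repSpec σ (m, n)` says that `(m, n)` is a reduced representative of `σ`,
i.e. `σ = [m/n]`, `1/2 ≤ m/n < 1` and `gcd(n, m) = 1`. -/
def repSpec (σ : MusInt) (p : ℕ × ℕ) : Prop :=
  ∃ h : (0 : ℚ) < (p.1 : ℚ) / (p.2 : ℚ),
    σ = cls ((p.1 : ℚ) / (p.2 : ℚ)) h ∧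
    (1 : ℚ) / 2 ≤ (p.1 : ℚ) / (p.2 : ℚ) ∧ (p.1 : ℚ) / (p.2 : ℚ) < 1 ∧
    Nat.gcd p.2 p.1 = 1

open Classical in
/-- The canonical reduced representative `(m_σ, n_σ)` of a musical interval. -/
noncomputable def rep (σ : MusInt) : ℕ × ℕ :=
  if h : ∃ p, repSpec σ p then h.choose else (1, 2)

/-- The numerator `m_σ`, so that `σ = [m_σ/n_σ]`. -/
noncomputable def mVal (σ : MusInt) : ℕ := (rep σ).1

/-- The map `𝒩`, sending `σ` to the denominator `n_σ`, so that `σ = [m_σ/n_σ]`. -/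
noncomputable def nVal (σ : MusInt) : ℕ := (rep σ).2

/-- The Kepler map `K(σ) = [(n_σ - m_σ)/m_σ]`. -/
noncomputable def kepler (σ : MusInt) : MusInt :=
  if h : (0 : ℚ) < ((nVal σ : ℚ) - (mVal σ : ℚ)) / (mVal σ : ℚ) then
    cls (((nVal σ : ℚ) - (mVal σ : ℚ)) / (mVal σ : ℚ)) h
  else octave

/-- The height `𝔥(σ) = min {ℓ ∈ ℕ₀ : K^ℓ(σ) = 𝔬}`. -/
noncomputable def height (σ : MusInt) : ℕ := sInf {ℓ : ℕ | kepler^[ℓ] σ = octave}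

/-- `n` is an Euclidean Gauss–Wantzel number: `n = 2^k * 3^l * 5^m` with
`l, m ∈ {0, 1}` and `n > 1`. -/
def IsEuclidean (n : ℕ) : Prop :=
  1 < n ∧ ∃ k l m : ℕ, (l = 0 ∨ l = 1) ∧ (m = 0 ∨ m = 1) ∧ n = 2 ^ k * 3 ^ l * 5 ^ m

/-- `p` is a Fermat prime: a prime of the form `2^(2^n) + 1`. -/
def IsFermatPrime (p : ℕ) : Prop := p.Prime ∧ ∃ n : ℕ, p = 2 ^ (2 ^ n) + 1

/-- `n` is a Gauss–Wantzel number: `n > 1` is a power of `2` times a product of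
distinct Fermat primes. -/
def IsGaussWantzel (n : ℕ) : Prop :=
  1 < n ∧ ∃ (k : ℕ) (s : Finset ℕ), (∀ p ∈ s, IsFermatPrime p) ∧ n = 2 ^ k * ∏ p ∈ s, p

/-- `σ` is Euclidean consonant: all members of its second Kepler sequence are
Euclidean Gauss–Wantzel numbers. -/
def EuclideanConsonant (σ : MusInt) : Prop :=
  ∀ j ≤ height σ, IsEuclidean (nVal (kepler^[j] σ))

/-- `σ` is Gaussian consonant: all members of its second Kepler sequence are
Gauss–Wantzel numbers. -/
def GaussianConsonant (σ : MusInt) : Prop :=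
  ∀ j ≤ height σ, IsGaussWantzel (nVal (kepler^[j] σ))

/-!
Write `σ = [m/n]` in reduced form with `1/2 ≤ m/n < 1`, so that `m < n ≤ 2m`, and
`K(σ) = [y]` with `y = (n - m)/m`. If `n = 2m`, coprimality forces `σ = [1/2] = 𝔬`, which `K`
fixes. Otherwise `0 < y < 1`, so bringing `y` into `[1/2, 1)` multiplies it by a nonnegative power
of `2`, which cannot enlarge its reduced denominator: `𝒩(K(σ)) ≤ den y ≤ m < n`.
-/
open Set

lemma octaveRel_equivalence : Equivalence octaveRel where
  refl _ := ⟨0, by simp⟩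
  symm := by
    rintro q₁ q₂ ⟨t, h⟩
    refine ⟨-t, ?_⟩
    rw [h, ← mul_assoc, ← zpow_add₀ two_ne_zero, neg_add_cancel, zpow_zero, one_mul]
  trans := by
    rintro q₁ q₂ q₃ ⟨s, h⟩ ⟨t, h'⟩
    exact ⟨s + t, by rw [h, h', ← mul_assoc, ← zpow_add₀ two_ne_zero]⟩

lemma cls_eq_cls_iff {x y : ℚ} (hx : 0 < x) (hy : 0 < y) :
    cls x hx = cls y hy ↔ ∃ t : ℤ, x = 2 ^ t * y :=
  ⟨fun h => octaveRel_equivalence.eqvGen_iff.mp (Quot.eqvGen_exact h), fun h => Quot.sound h⟩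

lemma cls_two_zpow_mul (t : ℤ) {x : ℚ} (hx : 0 < x) (h : 0 < 2 ^ t * x) :
    cls (2 ^ t * x) h = cls x hx :=
  Quot.sound ⟨t, rfl⟩

lemma exists_two_zpow_mul_mem_Ico {q : ℚ} (hq : 0 < q) :
    ∃ t : ℤ, 2 ^ t * q ∈ Ico (1 / 2) 1 := by
  obtain ⟨k, hk, hk'⟩ := exists_mem_Ico_zpow hq one_lt_two
  have hr : (0 : ℚ) < 2 ^ (k + 1) := by positivity
  have hk2 : (2 : ℚ) ^ k = 2 ^ (k + 1) / 2 := by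
    rw [zpow_add_one₀ two_ne_zero, mul_div_cancel_right₀ _ two_ne_zero]
  refine ⟨-(k + 1), ?_, ?_⟩ <;> rw [zpow_neg, inv_mul_eq_div]
  · rw [le_div_iff₀ hr]; linarith
  · rwa [div_lt_one hr]

lemma two_zpow_le_half {t : ℤ} (ht : t < 0) : (2 : ℚ) ^ t ≤ 1 / 2 :=
  calc (2 : ℚ) ^ t ≤ 2 ^ (-1 : ℤ) := zpow_le_zpow_right₀ one_le_two (by omega)
    _ = 1 / 2 := by norm_num

lemma two_le_two_zpow {t : ℤ} (ht : 0 < t) : (2 : ℚ) ≤ 2 ^ t :=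
  calc (2 : ℚ) = 2 ^ (1 : ℤ) := by norm_num
    _ ≤ 2 ^ t := zpow_le_zpow_right₀ one_le_two ht

lemma two_zpow_mul_mem_Ico_nonneg {q : ℚ} {t : ℤ} (hq : q < 1)
    (ht : 2 ^ t * q ∈ Ico (1 / 2) 1) : 0 ≤ t := by
  by_contra! h
  nlinarith [ht.1, two_zpow_le_half h, zpow_pos (two_pos : (0 : ℚ) < 2) t]

lemma eq_of_eq_two_zpow_mul {x y : ℚ} {t : ℤ} (hx : x ∈ Ico (1 / 2) 1)
    (hy : y ∈ Ico (1 / 2) 1) (h : x = 2 ^ t * y) : x = y := by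
  obtain ⟨hx1, hx2⟩ := hx
  obtain ⟨hy1, hy2⟩ := hy
  obtain ht | rfl | ht := lt_trichotomy t 0
  · nlinarith [two_zpow_le_half ht]
  · simpa using h
  · nlinarith [two_le_two_zpow ht]

lemma Rat.natAbs_num_den_natCast_div {a b : ℕ} (hb : 0 < b) (h : Nat.Coprime a b) :
    (((a : ℚ) / b).num.natAbs, ((a : ℚ) / b).den) = (a, b) := by
  have hb' : (0 : ℤ) < b := by exact_mod_cast hb
  have hnum := Rat.num_div_eq_of_coprime (a := a) hb' h
  have hden := Rat.den_div_eq_of_coprime (a := a) hb' h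
  push_cast at hnum hden
  rw [hnum]
  ext <;> simp only [Int.natAbs_natCast]
  exact_mod_cast hden

lemma Rat.den_intCast_div_natCast_le (a : ℤ) {b : ℕ} (hb : 0 < b) :
    ((a : ℚ) / b).den ≤ b := by
  have h := Rat.den_dvd a b
  rw [← Rat.intCast_div_eq_divInt, Int.cast_natCast] at h
  exact_mod_cast Int.le_of_dvd (by omega) h

lemma repSpec_cls {x : ℚ} (hx : 0 < x) (hI : x ∈ Ico (1 / 2) 1) :
    repSpec (cls x hx) (x.num.natAbs, x.den) := by
  have hx' : ((x.num.natAbs : ℕ) : ℚ) / x.den = x := by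
    rw [Nat.cast_natAbs, Int.cast_abs, abs_of_pos (Int.cast_pos.mpr (Rat.num_pos.mpr hx)),
      Rat.num_div_den]
  simp only [repSpec, hx', true_and]
  exact ⟨hx, hI.1, hI.2, x.reduced.symm⟩

lemma eq_of_repSpec_cls {x : ℚ} (hx : 0 < x) (hI : x ∈ Ico (1 / 2) 1) {p : ℕ × ℕ}
    (h : repSpec (cls x hx) p) : p = (x.num.natAbs, x.den) := by
  obtain ⟨hp, hcls, hp₁, hp₂, hcop⟩ := h
  obtain ⟨t, ht⟩ := (cls_eq_cls_iff hx hp).mp hcls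
  have hb : 0 < p.2 := by
    rcases Nat.eq_zero_or_pos p.2 with h0 | h0
    · simp [h0] at hp
    · exact h0
  rw [eq_of_eq_two_zpow_mul hI ⟨hp₁, hp₂⟩ ht,
    Rat.natAbs_num_den_natCast_div hb (Nat.coprime_comm.mp hcop)]

lemma exists_repSpec (σ : MusInt) : ∃ p, repSpec σ p := by
  induction σ using Quot.ind with
  | mk q =>
    obtain ⟨q, hq⟩ := q
    obtain ⟨t, ht⟩ := exists_two_zpow_mul_mem_Ico hq
    have hx : 0 < 2 ^ t * q := by positivity
    exact ⟨_, cls_two_zpow_mul t hq hx ▸ repSpec_cls hx ht⟩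

lemma repSpec_rep (σ : MusInt) : repSpec σ (rep σ) := by
  rw [rep, dif_pos (exists_repSpec σ)]
  exact (exists_repSpec σ).choose_spec

lemma rep_cls {x : ℚ} (hx : 0 < x) (hI : x ∈ Ico (1 / 2) 1) :
    rep (cls x hx) = (x.num.natAbs, x.den) :=
  eq_of_repSpec_cls hx hI (repSpec_rep _)

lemma rep_octave : rep octave = (1, 2) := by
  rw [octave, rep_cls _ ⟨by norm_num, by norm_num⟩]
  exact_mod_cast Rat.natAbs_num_den_natCast_div two_pos (Nat.coprime_one_left 2)

lemma kepler_octave : kepler octave = octave := by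
  have h : (0 : ℚ) < (((2 : ℕ) : ℚ) - ((1 : ℕ) : ℚ)) / ((1 : ℕ) : ℚ) := by norm_num
  rw [kepler, mVal, nVal, rep_octave, dif_pos h]
  exact (cls_eq_cls_iff _ _).mpr ⟨1, by norm_num⟩

lemma mVal_div_nVal_mem_Ico (σ : MusInt) : (mVal σ : ℚ) / nVal σ ∈ Ico (1 / 2) 1 :=
  ⟨(repSpec_rep σ).2.2.1, (repSpec_rep σ).2.2.2.1⟩

lemma mVal_lt_nVal_and_nVal_le_two_mul (σ : MusInt) :
    mVal σ < nVal σ ∧ nVal σ ≤ 2 * mVal σ := by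
  obtain ⟨h₁, h₂⟩ := mVal_div_nVal_mem_Ico σ
  have hn : (0 : ℚ) < nVal σ := by
    rcases (nVal σ).eq_zero_or_pos with h | h
    · norm_num [h] at h₁
    · exact_mod_cast h
  rw [div_lt_one hn] at h₂
  rw [le_div_iff₀ hn] at h₁
  have h₁' : (nVal σ : ℚ) ≤ 2 * mVal σ := by linarith
  exact ⟨by exact_mod_cast h₂, by exact_mod_cast h₁'⟩

lemma eq_octave_of_nVal_eq_two_mul {σ : MusInt} (h : nVal σ = 2 * mVal σ) : σ = octave := by
  obtain ⟨hpos, hσ, -, -, hcop⟩ := repSpec_rep σ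
  have hm : mVal σ = 1 :=
    Nat.Coprime.eq_one_of_dvd (Nat.coprime_comm.mp hcop) ⟨2, h.trans (mul_comm _ _)⟩
  calc σ = cls ((mVal σ : ℚ) / nVal σ) hpos := hσ
    _ = octave := by simp only [octave, h, hm]; norm_num

lemma nVal_cls_le_den {y : ℚ} (hy : 0 < y) (hy₁ : y < 1) : nVal (cls y hy) ≤ y.den := by
  obtain ⟨t, ht⟩ := exists_two_zpow_mul_mem_Ico hy
  lift t to ℕ using two_zpow_mul_mem_Ico_nonneg hy₁ ht
  have hx : 0 < 2 ^ (t : ℤ) * y := by positivity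
  rw [← cls_two_zpow_mul t hy hx, nVal, rep_cls hx ht, zpow_natCast]
  refine Nat.le_of_dvd y.den_pos ?_
  simpa using Rat.mul_den_dvd (2 ^ t) y

lemma nVal_kepler_lt {σ : MusInt} (hσ : σ ≠ octave) : nVal (kepler σ) < nVal σ := by
  obtain ⟨hmn, hnm⟩ := mVal_lt_nVal_and_nVal_le_two_mul σ
  have hn2m : nVal σ < 2 * mVal σ := lt_of_le_of_ne hnm (mt eq_octave_of_nVal_eq_two_mul hσ)
  have hm : (0 : ℚ) < mVal σ := by exact_mod_cast (by omega : 0 < mVal σ)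
  have hy : (0 : ℚ) < ((nVal σ : ℚ) - mVal σ) / mVal σ :=
    div_pos (sub_pos.mpr (by exact_mod_cast hmn)) hm
  have hy₁ : ((nVal σ : ℚ) - mVal σ) / mVal σ < 1 := by
    rw [div_lt_one hm, sub_lt_iff_lt_add]
    exact_mod_cast (by omega : nVal σ < mVal σ + mVal σ)
  calc nVal (kepler σ) = nVal (cls _ hy) := by rw [kepler, dif_pos hy]
    _ ≤ _ := nVal_cls_le_den hy hy₁
    _ ≤ mVal σ := by
      exact_mod_cast Rat.den_intCast_div_natCast_le ((nVal σ : ℤ) - mVal σ) (by omega)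
    _ < nVal σ := hmn

/-- `𝒩(K(σ)) ≤ 𝒩(σ)`, with equality iff `σ` is the octave. -/
theorem nVal_kepler_le (σ : MusInt) :
    nVal (kepler σ) ≤ nVal σ ∧ (nVal (kepler σ) = nVal σ ↔ σ = octave) := by
  by_cases hσ : σ = octave
  · subst hσ
    simp [kepler_octave]
  · have h := nVal_kepler_lt hσ
    exact ⟨h.le, fun h' => absurd h' h.ne, fun h' => absurd h' hσ⟩
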